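/- arXiv:1111.4986 — 4 statements merged into one kernel-verified Lean document; each statement's English description precedes it below -/
import Mathlib

section
/- Let n ≥ 2 and c ∈ (0,1) rational, and set Δ_c = {(x_1,…,x_n) ∈ ℝ^n : x_i ≥ 0 for all i, x_1+…+x_n ≤ c}. If f : Δ_c → ℝ is convex with f(x) ≥ 0 for all x ∈ Δ_c, then for every sufficiently large integer k with kc ∈ ℤ one has ∑_{α ∈ Δ_c ∩ (1/k)ℤ^n} f(α) ≥ k^n ∫_{Δ_{c−(n−1)/k}} f dμ, where μ is Lebesgue measure. -/
/-!
Scaling by `k` reduces the claim to `k = 1` and the integral simplex `Δ_K`, `K = kc`. Up to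
the null set of lattice points, `Δ_{K-n+1}` is covered by the unit cubes `[m, m + 1)` with
`∑ mᵢ + n ≤ K`, all of whose vertices lie in `Δ_K`. On such a cube Jensen's inequality bounds
`f` by its multilinear interpolant from the `2ⁿ` vertices, whose integral is `2⁻ⁿ` times the
sum of the vertex values, and each lattice point of `Δ_K` is a vertex of at most `2ⁿ` of these
cubes. Comparing `f` with the (integrable) interpolant needs no integrability of `f`: a
non-integrable function has integral `0`.
-/

open MeasureTheory

/-- The simplex `Δ_c = {x ∈ ℝⁿ : xᵢ ≥ 0, ∑ xᵢ ≤ c}`. -/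
def simplexSet (n : ℕ) (c : ℝ) : Set (Fin n → ℝ) :=
  {x | (∀ i, 0 ≤ x i) ∧ ∑ i, x i ≤ c}

/-- The points `m ∈ ℕⁿ` with `∑ mᵢ ≤ K`; the lattice points of `Δ_c ∩ (1/k)ℤⁿ`
are exactly the points `m/k` for `m` in this finset, when `kc = K`. -/
def simplexLattice (n K : ℕ) : Finset (Fin n → ℕ) :=
  (Fintype.piFinset fun _ => Finset.range (K + 1)).filter fun m => ∑ i, m i ≤ K

open Finset

section CubeWeight

variable {ι : Type*} [Fintype ι] [DecidableEq ι]

theorem Fintype.sum_prod_ite_mem {R : Type*} [CommSemiring R] (a b : ι → R) :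
    ∑ S : Finset ι, ∏ i, (if i ∈ S then a i else b i) = ∏ i, (a i + b i) := by
  rw [Fintype.prod_add]
  refine Finset.sum_congr rfl fun S _ => ?_
  rw [prod_ite, filter_not, filter_mem_eq_of_subset (subset_univ S), compl_eq_univ_sdiff]

def cubeWeight (t : ι → ℝ) (S : Finset ι) : ℝ :=
  ∏ i, if i ∈ S then t i else 1 - t i

theorem cubeWeight_nonneg {t : ι → ℝ} (ht : ∀ i, t i ∈ Set.Icc 0 1) (S : Finset ι) :
    0 ≤ cubeWeight t S :=
  prod_nonneg fun i _ => by split_ifs <;> linarith [(ht i).1, (ht i).2]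

theorem sum_cubeWeight (t : ι → ℝ) : ∑ S, cubeWeight t S = 1 := by
  simp [cubeWeight, Fintype.sum_prod_ite_mem]

theorem sum_cubeWeight_smul_indicator (t : ι → ℝ) :
    ∑ S, cubeWeight t S • (fun i => if i ∈ S then (1 : ℝ) else 0) = t := by
  funext j
  -- replacing the factor `1 - t j` by `0` keeps exactly the terms with `j ∈ S`
  let b : ι → ℝ := fun i => if i = j then 0 else 1 - t i
  have hterm (S : Finset ι) : cubeWeight t S * (if j ∈ S then 1 else 0)
      = ∏ i, if i ∈ S then t i else b i := by
    by_cases hj : j ∈ S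
    · simp only [cubeWeight, hj, if_true, mul_one]
      refine prod_congr rfl fun i _ => ?_
      by_cases hi : i = j
      · subst hi; simp [hj]
      · simp [b, hi]
    · rw [if_neg hj, mul_zero, eq_comm]
      exact prod_eq_zero (mem_univ j) (by simp [b, hj])
  simp only [Finset.sum_apply, Pi.smul_apply, smul_eq_mul, hterm, Fintype.sum_prod_ite_mem,
    b]
  rw [prod_eq_single j (fun i _ hi => by simp [hi]) (by simp)]
  simp

end CubeWeight

theorem setIntegral_Ico_add_one_ite (a : ℝ) (p : Prop) [Decidable p] :
    ∫ y in Set.Ico a (a + 1), (if p then y - a else 1 - (y - a)) = 2⁻¹ := by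
  rw [← integral_Icc_eq_integral_Ico, integral_Icc_eq_integral_Ioc,
    ← intervalIntegral.integral_of_le (by linarith)]
  split_ifs
  · rw [intervalIntegral.integral_comp_sub_right (fun y => y)]
    norm_num [integral_id]
  · rw [intervalIntegral.integral_comp_sub_right (fun y => 1 - y),
      intervalIntegral.integral_comp_sub_left (fun y => y)]
    norm_num [integral_id]

section UnitCube

variable {ι : Type*}

def unitCube (m : ι → ℕ) : Set (ι → ℝ) :=
  Set.univ.pi fun i => Set.Ico (m i : ℝ) (m i + 1)

theorem mem_unitCube {m : ι → ℕ} {x : ι → ℝ} :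
    x ∈ unitCube m ↔ ∀ i, x i ∈ Set.Ico (m i : ℝ) (m i + 1) := by
  simp [unitCube]

theorem sub_mem_Icc_of_mem_unitCube {m : ι → ℕ} {x : ι → ℝ} (hx : x ∈ unitCube m) (i : ι) :
    x i - m i ∈ Set.Icc (0 : ℝ) 1 := by
  have := mem_unitCube.1 hx i
  constructor <;> linarith [this.1, this.2]

theorem floor_mem_unitCube {x : ι → ℝ} (hx : 0 ≤ x) : x ∈ unitCube fun i => ⌊x i⌋₊ :=
  mem_unitCube.2 fun i => ⟨Nat.floor_le (hx i), Nat.lt_floor_add_one _⟩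

theorem eq_floor_of_mem_unitCube {m : ι → ℕ} {x : ι → ℝ} (hx : x ∈ unitCube m) :
    m = fun i => ⌊x i⌋₊ := by
  funext i
  have hi := mem_unitCube.1 hx i
  exact ((Nat.floor_eq_iff ((Nat.cast_nonneg _).trans hi.1)).2 hi).symm

variable [Fintype ι] [DecidableEq ι]

def cubeVertex (m : ι → ℕ) (S : Finset ι) : ι → ℕ :=
  fun i => m i + if i ∈ S then 1 else 0

noncomputable def cubeHat (m : ι → ℕ) (S : Finset ι) : (ι → ℝ) → ℝ :=
  (unitCube m).indicator fun x => cubeWeight (fun i => x i - m i) S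

theorem cubeHat_nonneg (m : ι → ℕ) (S : Finset ι) (x : ι → ℝ) : 0 ≤ cubeHat m S x :=
  Set.indicator_nonneg (fun _ hx => cubeWeight_nonneg (sub_mem_Icc_of_mem_unitCube hx) S) x

theorem cubeHat_eq_prod (m : ι → ℕ) (S : Finset ι) :
    cubeHat m S = fun x => ∏ i, (Set.Ico (m i : ℝ) (m i + 1)).indicator
      (fun y => if i ∈ S then y - m i else 1 - (y - m i)) (x i) := by
  classical
  funext x
  simp only [cubeHat, cubeWeight, Set.indicator_apply, Fintype.prod_ite_zero, mem_unitCube]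

theorem integrable_cubeHat (m : ι → ℕ) (S : Finset ι) : Integrable (cubeHat m S) := by
  rw [cubeHat_eq_prod]
  refine Integrable.fintype_prod (f := fun i => (Set.Ico (m i : ℝ) (m i + 1)).indicator
    (fun y => if i ∈ S then y - m i else 1 - (y - m i))) fun i => ?_
  refine (Continuous.integrableOn_Icc ?_).mono_set Set.Ico_subset_Icc_self
    |>.integrable_indicator measurableSet_Ico
  split_ifs <;> fun_prop

theorem integral_cubeHat (m : ι → ℕ) (S : Finset ι) :
    ∫ x, cubeHat m S x = 2⁻¹ ^ Fintype.card ι := by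
  rw [cubeHat_eq_prod, volume_pi, integral_fintype_prod_eq_prod (𝕜 := ℝ)
    (f := fun i => (Set.Ico (m i : ℝ) (m i + 1)).indicator
      (fun y => if i ∈ S then y - m i else 1 - (y - m i)))]
  simp only [integral_indicator measurableSet_Ico, setIntegral_Ico_add_one_ite, prod_const,
    card_univ]

theorem sum_cubeWeight_smul_cubeVertex (m : ι → ℕ) (x : ι → ℝ) :
    ∑ S, cubeWeight (fun i => x i - m i) S • (fun i => (cubeVertex m S i : ℝ)) = x := by
  have hsplit (S : Finset ι) : (fun i => (cubeVertex m S i : ℝ))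
      = (fun i => (m i : ℝ)) + fun i => if i ∈ S then (1 : ℝ) else 0 := by
    funext i; simp [cubeVertex]
  simp only [hsplit, smul_add, sum_add_distrib, ← sum_smul, sum_cubeWeight, one_smul,
    sum_cubeWeight_smul_indicator]
  funext i; simp

theorem ConvexOn.le_sum_cubeWeight_mul {s : Set (ι → ℝ)} {f : (ι → ℝ) → ℝ}
    (hf : ConvexOn ℝ s f) {m : ι → ℕ} (hm : ∀ S, (fun i => (cubeVertex m S i : ℝ)) ∈ s)
    {x : ι → ℝ} (hx : x ∈ unitCube m) :
    f x ≤ ∑ S, cubeWeight (fun i => x i - m i) S * f fun i => (cubeVertex m S i : ℝ) := by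
  conv_lhs => rw [← sum_cubeWeight_smul_cubeVertex m x]
  exact hf.map_sum_le (fun S _ => cubeWeight_nonneg (sub_mem_Icc_of_mem_unitCube hx) S)
    (sum_cubeWeight _) fun S _ => hm S

end UnitCube

section SimplexCubes

variable {n K : ℕ}

theorem mem_simplexLattice {m : Fin n → ℕ} : m ∈ simplexLattice n K ↔ ∑ i, m i ≤ K := by
  simp only [simplexLattice, mem_filter, Fintype.mem_piFinset, mem_range, and_iff_right_iff_imp]
  exact fun h i => Nat.lt_succ_of_le ((single_le_sum (fun j _ => Nat.zero_le (m j))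
    (mem_univ i)).trans h)

theorem natCast_mem_simplexSet {m : Fin n → ℕ} (hm : m ∈ simplexLattice n K) :
    (fun i => (m i : ℝ)) ∈ simplexSet n K :=
  ⟨fun i => Nat.cast_nonneg _, by
    simpa only [← Nat.cast_sum] using (Nat.cast_le (α := ℝ)).2 (mem_simplexLattice.1 hm)⟩

variable (n K) in
def cubeCorners : Finset (Fin n → ℕ) :=
  (simplexLattice n K).filter fun m => ∑ i, m i + n ≤ K

theorem mem_cubeCorners {m : Fin n → ℕ} : m ∈ cubeCorners n K ↔ ∑ i, m i + n ≤ K := by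
  rw [cubeCorners, mem_filter, mem_simplexLattice]
  exact ⟨And.right, fun h => ⟨by omega, h⟩⟩

theorem sum_cubeVertex (m : Fin n → ℕ) (S : Finset (Fin n)) :
    ∑ i, cubeVertex m S i = ∑ i, m i + #S := by
  simp [cubeVertex, sum_add_distrib]

theorem cubeVertex_mem_simplexLattice {m : Fin n → ℕ} (hm : m ∈ cubeCorners n K)
    (S : Finset (Fin n)) : cubeVertex m S ∈ simplexLattice n K := by
  have := (card_le_univ S).trans_eq (Fintype.card_fin n)
  rw [mem_simplexLattice, sum_cubeVertex]
  rw [mem_cubeCorners] at hm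
  omega

theorem cubeVertex_injective (S : Finset (Fin n)) :
    Function.Injective fun m => cubeVertex m S :=
  fun _ _ h => funext fun i => by simpa [cubeVertex] using congrFun h i

theorem sum_sum_cubeVertex_le {F : (Fin n → ℕ) → ℝ} (hF : ∀ m ∈ simplexLattice n K, 0 ≤ F m) :
    ∑ m ∈ cubeCorners n K, ∑ S, F (cubeVertex m S)
      ≤ 2 ^ n * ∑ m ∈ simplexLattice n K, F m := by
  have hS (S : Finset (Fin n)) :
      ∑ m ∈ cubeCorners n K, F (cubeVertex m S) ≤ ∑ m ∈ simplexLattice n K, F m := by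
    rw [← sum_image fun m _ m' _ h => cubeVertex_injective S h]
    refine sum_le_sum_of_subset_of_nonneg ?_ fun m hm _ => hF m hm
    exact image_subset_iff.2 fun m hm => cubeVertex_mem_simplexLattice hm S
  calc ∑ m ∈ cubeCorners n K, ∑ S, F (cubeVertex m S)
      ≤ ∑ _S : Finset (Fin n), ∑ m ∈ simplexLattice n K, F m := by
        rw [sum_comm]; exact sum_le_sum fun S _ => hS S
    _ = 2 ^ n * ∑ m ∈ simplexLattice n K, F m := by simp

-- Off the lattice some `⌊x i⌋₊ < x i`, so `∑ ⌊x i⌋₊ < K - n + 1` holds strictly.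
theorem floor_mem_cubeCorners {x : Fin n → ℝ} (hx : x ∈ simplexSet n (K - (n - 1)))
    (hxlat : x ∉ Set.range fun m : Fin n → ℕ => fun i => (m i : ℝ)) :
    (fun i => ⌊x i⌋₊) ∈ cubeCorners n K := by
  have hfloor (i : Fin n) : (⌊x i⌋₊ : ℝ) ≤ x i := Nat.floor_le (hx.1 i)
  obtain ⟨j, hj⟩ : ∃ j, (⌊x j⌋₊ : ℝ) < x j := by
    by_contra! h
    exact hxlat ⟨_, funext fun i => le_antisymm (hfloor i) (h i)⟩
  have hlt : ((∑ i, ⌊x i⌋₊ : ℕ) : ℝ) < K - (n - 1) := by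
    push_cast
    exact (sum_lt_sum (fun i _ => hfloor i) ⟨j, mem_univ j, hj⟩).trans_le hx.2
  rw [mem_cubeCorners]
  have : ((∑ i, ⌊x i⌋₊ + n : ℕ) : ℝ) < K + 1 := by push_cast at hlt ⊢; linarith
  exact Nat.lt_succ_iff.1 (by exact_mod_cast this)

end SimplexCubes

section Interpolant

variable {n K : ℕ}

variable (K) in
noncomputable def cubeInterpolant (F : (Fin n → ℝ) → ℝ) (x : Fin n → ℝ) : ℝ :=
  ∑ m ∈ cubeCorners n K, ∑ S, cubeHat m S x * F fun i => (cubeVertex m S i : ℝ)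

theorem integrable_cubeInterpolant (F : (Fin n → ℝ) → ℝ) : Integrable (cubeInterpolant K F) :=
  integrable_finsetSum _ fun m _ => integrable_finsetSum _ fun S _ =>
    (integrable_cubeHat m S).mul_const _

theorem integral_cubeInterpolant (F : (Fin n → ℝ) → ℝ) :
    ∫ x, cubeInterpolant K F x
      = 2⁻¹ ^ n * ∑ m ∈ cubeCorners n K, ∑ S, F (fun i => (cubeVertex m S i : ℝ)) := by
  simp only [cubeInterpolant]
  rw [integral_finsetSum _ fun m _ => integrable_finsetSum _ fun S _ =>
    (integrable_cubeHat m S).mul_const _, mul_sum]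
  refine sum_congr rfl fun m _ => ?_
  rw [integral_finsetSum _ fun S _ => (integrable_cubeHat m S).mul_const _, mul_sum]
  simp only [integral_mul_const, integral_cubeHat, Fintype.card_fin]

theorem cubeInterpolant_nonneg {F : (Fin n → ℝ) → ℝ} (hF : ∀ x ∈ simplexSet n K, 0 ≤ F x)
    (x : Fin n → ℝ) : 0 ≤ cubeInterpolant K F x :=
  sum_nonneg fun m hm => sum_nonneg fun S _ => mul_nonneg (cubeHat_nonneg m S x)
    (hF _ (natCast_mem_simplexSet (cubeVertex_mem_simplexLattice hm S)))

theorem cubeInterpolant_eq {F : (Fin n → ℝ) → ℝ} {m : Fin n → ℕ} (hm : m ∈ cubeCorners n K)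
    {x : Fin n → ℝ} (hx : x ∈ unitCube m) :
    cubeInterpolant K F x
      = ∑ S, cubeWeight (fun i => x i - m i) S * F fun i => (cubeVertex m S i : ℝ) := by
  rw [cubeInterpolant, sum_eq_single_of_mem m hm]
  · simp only [cubeHat, Set.indicator_of_mem hx]
  · intro m' _ hm'
    refine sum_eq_zero fun S _ => ?_
    rw [cubeHat, Set.indicator_of_notMem, zero_mul]
    exact fun hx' => hm' <|
      (eq_floor_of_mem_unitCube hx').trans (eq_floor_of_mem_unitCube hx).symm

theorem le_cubeInterpolant {F : (Fin n → ℝ) → ℝ} (hF : ConvexOn ℝ (simplexSet n K) F)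
    {x : Fin n → ℝ} (hx : x ∈ simplexSet n (K - (n - 1)))
    (hxlat : x ∉ Set.range fun m : Fin n → ℕ => fun i => (m i : ℝ)) :
    F x ≤ cubeInterpolant K F x := by
  have hm := floor_mem_cubeCorners hx hxlat
  have hxm := floor_mem_unitCube hx.1
  rw [cubeInterpolant_eq hm hxm]
  exact hF.le_sum_cubeWeight_mul
    (fun S => natCast_mem_simplexSet (cubeVertex_mem_simplexLattice hm S)) hxm

end Interpolant

theorem measurableSet_simplexSet (n : ℕ) (c : ℝ) : MeasurableSet (simplexSet n c) := by
  have : simplexSet n c = (⋂ i, {x | 0 ≤ x i}) ∩ {x | ∑ i, x i ≤ c} := by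
    ext x; simp [simplexSet]
  rw [this]
  exact (MeasurableSet.iInter fun i =>
    measurableSet_le measurable_const (measurable_pi_apply i)).inter
      (measurableSet_le (by fun_prop) measurable_const)

theorem simplexSet_mono (n : ℕ) {c c' : ℝ} (h : c ≤ c') : simplexSet n c ⊆ simplexSet n c' :=
  fun _ hx => ⟨hx.1, hx.2.trans h⟩

theorem setIntegral_simplexSet_le_sum_simplexLattice {n K : ℕ} [NeZero n]
    {F : (Fin n → ℝ) → ℝ} (hconv : ConvexOn ℝ (simplexSet n K) F)
    (hpos : ∀ x ∈ simplexSet n K, 0 ≤ F x) :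
    ∫ x in simplexSet n (K - (n - 1)), F x
      ≤ ∑ m ∈ simplexLattice n K, F fun i => (m i : ℝ) := by
  have hsub : simplexSet n (K - (n - 1)) ⊆ simplexSet n K :=
    simplexSet_mono n (by linarith [(Nat.one_le_cast (α := ℝ)).2 (NeZero.one_le (n := n))])
  have hmeas := measurableSet_simplexSet n (K - (n - 1))
  have hlat := (Set.countable_range fun m : Fin n → ℕ => fun i => (m i : ℝ)).ae_notMem volume
  calc ∫ x in simplexSet n (K - (n - 1)), F x
      ≤ ∫ x in simplexSet n (K - (n - 1)), cubeInterpolant K F x := by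
        refine integral_mono_of_nonneg ?_ (integrable_cubeInterpolant F).integrableOn ?_
        · filter_upwards [ae_restrict_mem hmeas] with x hx using hpos x (hsub hx)
        · filter_upwards [ae_restrict_mem hmeas, ae_restrict_of_ae hlat] with x hx hxlat
            using le_cubeInterpolant hconv hx hxlat
    _ ≤ ∫ x, cubeInterpolant K F x :=
        setIntegral_le_integral (integrable_cubeInterpolant F)
          (ae_of_all _ (cubeInterpolant_nonneg hpos))
    _ ≤ 2⁻¹ ^ n * (2 ^ n * ∑ m ∈ simplexLattice n K, F fun i => (m i : ℝ)) := by
        rw [integral_cubeInterpolant]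
        gcongr
        exact sum_sum_cubeVertex_le fun m hm => hpos _ (natCast_mem_simplexSet hm)
    _ = ∑ m ∈ simplexLattice n K, F fun i => (m i : ℝ) := by
        rw [← mul_assoc, ← mul_pow]; norm_num

theorem inv_smul_mem_simplexSet_iff {n : ℕ} {a : ℝ} (ha : 0 < a) {c : ℝ} {x : Fin n → ℝ} :
    a⁻¹ • x ∈ simplexSet n c ↔ x ∈ simplexSet n (a * c) := by
  simp only [simplexSet, Set.mem_ofPred_eq, Pi.smul_apply, smul_eq_mul, ← mul_sum,
    inv_mul_le_iff₀ ha, mul_nonneg_iff_of_pos_left (inv_pos.2 ha)]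

open scoped Pointwise in
theorem smul_simplexSet {n : ℕ} {a : ℝ} (ha : 0 < a) (c : ℝ) :
    a • simplexSet n c = simplexSet n (a * c) := by
  ext x
  rw [Set.mem_smul_set_iff_inv_smul_mem₀ ha.ne', inv_smul_mem_simplexSet_iff ha]

theorem setIntegral_simplexSet_mul_comp_inv_smul {n : ℕ} {a : ℝ} (ha : 0 < a) (c : ℝ)
    (f : (Fin n → ℝ) → ℝ) :
    ∫ x in simplexSet n (a * c), f (a⁻¹ • x) = a ^ n * ∫ x in simplexSet n c, f x := by
  rw [Measure.setIntegral_comp_smul_of_pos volume f _ (inv_pos.2 ha),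
    smul_simplexSet (inv_pos.2 ha), inv_mul_cancel_left₀ ha.ne', Module.finrank_fin_fun, inv_pow,
    inv_inv, smul_eq_mul]

theorem ConvexOn.comp_inv_smul_simplexSet {n : ℕ} {a : ℝ} (ha : 0 < a) {c : ℝ}
    {f : (Fin n → ℝ) → ℝ} (hf : ConvexOn ℝ (simplexSet n c) f) :
    ConvexOn ℝ (simplexSet n (a * c)) fun x => f (a⁻¹ • x) := by
  let g : (Fin n → ℝ) →ₗ[ℝ] Fin n → ℝ := a⁻¹ • LinearMap.id
  have hpre : g ⁻¹' simplexSet n c = simplexSet n (a * c) :=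
    Set.ext fun _ => inv_smul_mem_simplexSet_iff ha
  rw [← hpre]
  exact hf.comp_linearMap g

theorem stmt_2_general (n : ℕ) (hn : 2 ≤ n) (c : ℚ)
    (f : (Fin n → ℝ) → ℝ)
    (hconv : ConvexOn ℝ (simplexSet n (c : ℝ)) f)
    (hpos : ∀ x ∈ simplexSet n (c : ℝ), 0 ≤ f x) :
    ∃ k₀ : ℕ, ∀ k : ℕ, k₀ ≤ k → ∀ K : ℕ, (k : ℝ) * (c : ℝ) = (K : ℝ) →
      (k : ℝ) ^ n * (∫ x in simplexSet n ((c : ℝ) - ((n : ℝ) - 1) / (k : ℝ)), f x)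
        ≤ ∑ m ∈ simplexLattice n K, f fun i => (m i : ℝ) / (k : ℝ) := by
  refine ⟨1, fun k hk1 K hK => ?_⟩
  have hk : (0 : ℝ) < k := by exact_mod_cast hk1
  have : NeZero n := ⟨by omega⟩
  have hmem {x : Fin n → ℝ} : (k : ℝ)⁻¹ • x ∈ simplexSet n c ↔ x ∈ simplexSet n K := by
    rw [inv_smul_mem_simplexSet_iff hk, hK]
  have hconv' : ConvexOn ℝ (simplexSet n K) fun x => f ((k : ℝ)⁻¹ • x) := by
    simpa only [hK] using hconv.comp_inv_smul_simplexSet hk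
  calc (k : ℝ) ^ n * (∫ x in simplexSet n ((c : ℝ) - ((n : ℝ) - 1) / (k : ℝ)), f x)
      = ∫ x in simplexSet n (K - (n - 1)), f ((k : ℝ)⁻¹ • x) := by
        rw [← setIntegral_simplexSet_mul_comp_inv_smul hk, mul_sub, hK,
          mul_div_cancel₀ _ hk.ne']
    _ ≤ ∑ m ∈ simplexLattice n K, f ((k : ℝ)⁻¹ • fun i => (m i : ℝ)) :=
        setIntegral_simplexSet_le_sum_simplexLattice hconv' fun x hx => hpos _ (hmem.2 hx)
    _ = ∑ m ∈ simplexLattice n K, f fun i => (m i : ℝ) / (k : ℝ) := by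
        simp only [div_eq_inv_mul]; rfl

/-- If `f` is convex and nonnegative on `Δ_c`, then for all sufficiently large `k`
with `kc ∈ ℤ`, `∑_{α ∈ Δ_c ∩ (1/k)ℤⁿ} f(α) ≥ kⁿ ∫_{Δ_{c−(n−1)/k}} f dμ`. -/
theorem stmt_2 (n : ℕ) (hn : 2 ≤ n) (c : ℚ) (hc0 : 0 < c) (hc1 : c < 1)
    (f : (Fin n → ℝ) → ℝ)
    (hconv : ConvexOn ℝ (simplexSet n (c : ℝ)) f)
    (hpos : ∀ x ∈ simplexSet n (c : ℝ), 0 ≤ f x) :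
    ∃ k₀ : ℕ, ∀ k : ℕ, k₀ ≤ k → ∀ K : ℕ, (k : ℝ) * (c : ℝ) = (K : ℝ) →
      (k : ℝ) ^ n * (∫ x in simplexSet n ((c : ℝ) - ((n : ℝ) - 1) / (k : ℝ)), f x)
        ≤ ∑ m ∈ simplexLattice n K, f fun i => (m i : ℝ) / (k : ℝ) :=
  stmt_2_general n hn c f hconv hpos
end

section
/- Let d ≥ 1 and let x_1, …, x_d be real numbers with mean μ = (x_1 + … + x_d)/d. Let a < b be real numbers and m ≥ 1 an integer, and suppose that at least m of the indices i satisfy x_i ≤ a and at least m of the indices i satisfy x_i ≥ b. Then ∑_{i=1}^d (x_i − μ)^2 ≥ (m/2)(b − a)^2. -/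
/-!
Points `x i ≤ a` lie at distance at least `(c - a)⁺` from any centre `c`, and points `b ≤ x i`
at distance at least `(b - c)⁺`. These two gaps add up to at least `b - a`, so their squares add
up to at least `(b - a)² / 2`, and each is paid by at least `m` points; take `c` to be the
mean.
-/

open Finset

lemma sq_posPart_le_sq_of_le {u v : ℝ} (h : u ≤ v) : u⁺ ^ 2 ≤ v ^ 2 := by
  rcases le_total u 0 with hu | hu
  · rw [posPart_eq_zero.mpr hu]
    simpa using sq_nonneg v
  · rw [posPart_eq_self.mpr hu]
    exact pow_le_pow_left₀ hu h 2

lemma half_sq_sub_le_sq_posPart_add_sq_posPart {a b : ℝ} (hab : a ≤ b) (c : ℝ) :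
    (b - a) ^ 2 / 2 ≤ (c - a)⁺ ^ 2 + (b - c)⁺ ^ 2 := by
  have hgap : b - a ≤ (c - a)⁺ + (b - c)⁺ := by
    linarith [le_posPart (c - a), le_posPart (b - c)]
  have hsq : (b - a) ^ 2 ≤ ((c - a)⁺ + (b - c)⁺) ^ 2 :=
    pow_le_pow_left₀ (by linarith) hgap 2
  nlinarith [sq_nonneg ((c - a)⁺ - (b - c)⁺)]

section

variable {ι : Type*} [Fintype ι] (x : ι → ℝ) (c : ℝ)

lemma card_filter_le_mul_le_sum_sq_sub (a : ℝ) :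
    #{i | x i ≤ a} * (c - a)⁺ ^ 2 ≤ ∑ i ∈ {i | x i ≤ a}, (x i - c) ^ 2 := by
  rw [← nsmul_eq_mul]
  refine card_nsmul_le_sum _ _ _ fun i hi => ?_
  have hle : c - a ≤ c - x i := by linarith [(mem_filter.mp hi).2]
  exact (sq_posPart_le_sq_of_le hle).trans_eq (by ring)

lemma card_filter_ge_mul_le_sum_sq_sub (b : ℝ) :
    #{i | b ≤ x i} * (b - c)⁺ ^ 2 ≤ ∑ i ∈ {i | b ≤ x i}, (x i - c) ^ 2 := by
  rw [← nsmul_eq_mul]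
  refine card_nsmul_le_sum _ _ _ fun i hi => ?_
  exact sq_posPart_le_sq_of_le (by linarith [(mem_filter.mp hi).2])

theorem mul_sq_le_sum_sq_sub_of_le_card_filter {a b : ℝ} (hab : a < b) {m : ℕ}
    (ha : m ≤ #{i | x i ≤ a}) (hb : m ≤ #{i | b ≤ x i}) :
    (m : ℝ) / 2 * (b - a) ^ 2 ≤ ∑ i, (x i - c) ^ 2 := by
  classical
  have hdisj : Disjoint (α := Finset ι) {i | x i ≤ a} {i | b ≤ x i} :=
    disjoint_filter.mpr fun i _ hia hib => by linarith
  have hunion : ∑ i ∈ {i | x i ≤ a}, (x i - c) ^ 2 + ∑ i ∈ {i | b ≤ x i}, (x i - c) ^ 2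
      ≤ ∑ i, (x i - c) ^ 2 := by
    rw [← sum_union hdisj]
    exact sum_le_univ_sum_of_nonneg fun i => sq_nonneg _
  have ha' : (m : ℝ) * (c - a)⁺ ^ 2 ≤ #{i | x i ≤ a} * (c - a)⁺ ^ 2 := by gcongr
  have hb' : (m : ℝ) * (b - c)⁺ ^ 2 ≤ #{i | b ≤ x i} * (b - c)⁺ ^ 2 := by gcongr
  calc (m : ℝ) / 2 * (b - a) ^ 2 = m * ((b - a) ^ 2 / 2) := by ring
    _ ≤ m * ((c - a)⁺ ^ 2 + (b - c)⁺ ^ 2) := by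
      gcongr
      exact half_sq_sub_le_sq_posPart_add_sq_posPart hab.le c
    _ ≤ ∑ i, (x i - c) ^ 2 := by
      linarith [card_filter_le_mul_le_sum_sq_sub x c a, card_filter_ge_mul_le_sum_sq_sub x c b]

end

theorem stmt_5_general (d m : ℕ) (x : Fin d → ℝ) (a b : ℝ)
    (hab : a < b)
    (ha : m ≤ (Finset.univ.filter fun i => x i ≤ a).card)
    (hb : m ≤ (Finset.univ.filter fun i => b ≤ x i).card) :
    (m : ℝ) / 2 * (b - a) ^ 2 ≤ ∑ i, (x i - (∑ j, x j) / d) ^ 2 :=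
  mul_sq_le_sum_sq_sub_of_le_card_filter x _ hab ha hb

/-- If among `x_1, …, x_d` at least `m` values are `≤ a` and at least `m` values are
`≥ b`, with `a < b`, then the sum of squared deviations from the mean is at least
`(m/2)(b−a)²`. -/
theorem stmt_5 (d m : ℕ) (hd : 1 ≤ d) (hm : 1 ≤ m) (x : Fin d → ℝ) (a b : ℝ)
    (hab : a < b)
    (ha : m ≤ (Finset.univ.filter fun i => x i ≤ a).card)
    (hb : m ≤ (Finset.univ.filter fun i => b ≤ x i).card) :
    (m : ℝ) / 2 * (b - a) ^ 2 ≤ ∑ i, (x i - (∑ j, x j) / d) ^ 2 :=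
  stmt_5_general d m x a b hab ha hb
end

section
/- Let V be a finite-dimensional complex vector space, N ≥ 1, and let W_1, …, W_N and W'_1, …, W'_N be subspaces giving two internal direct sum decompositions V = W_1 ⊕ … ⊕ W_N = W'_1 ⊕ … ⊕ W'_N such that for every i, W_1 ⊕ … ⊕ W_i = W'_1 ⊕ … ⊕ W'_i. For t ∈ ℂ*, let λ(t) ∈ GL(V) act as multiplication by t^i on W_i, and λ'(t) ∈ GL(V) act as multiplication by t^i on W'_i. Then for any i and any v ∈ W_i, writing v = w_1 + … + w_N with w_j ∈ W'_j, one has w_j = 0 for j > i, λ'(t)^{−1} λ(t) v = ∑_{j ≤ i} t^{i−j} w_j for all t ∈ ℂ*, and consequently λ'(t)^{−1} λ(t) v → w_i as t → 0. -/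
/-!
A vector `v ∈ W i` lies in the flag piece `⨆ j ≤ i, W j = ⨆ j ≤ i, W' j`, so independence of the
`W'` forces its `W'`-components of index `j > i` to vanish. Inverting `λ'` componentwise gives
`λ'(t)⁻¹ λ(t) v = ∑ j ≤ i, t ^ (i - j) • w j`, a polynomial in `t` whose value at `0` is `w i`.
-/

open Filter

theorem iSupIndep.eq_zero_of_sum_mem_biSup {R M ι : Type*} [Ring R] [AddCommGroup M] [Module R M]
    [Fintype ι] {W : ι → Submodule R M} (hW : iSupIndep W) {w : ι → M} (hw : ∀ j, w j ∈ W j)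
    {s : Set ι} (hsum : ∑ j, w j ∈ ⨆ k ∈ s, W k) {j : ι} (hj : j ∉ s) : w j = 0 := by
  classical
  have hs : (⨆ k ∈ s, W k) ≤ ⨆ k ∈ ({j}ᶜ : Set ι), W k :=
    biSup_mono fun k hk hkj => hj (hkj ▸ hk)
  have hrest : ∑ k ∈ Finset.univ.erase j, w k ∈ ⨆ k ∈ ({j}ᶜ : Set ι), W k :=
    Submodule.sum_mem _ fun k hk =>
      Submodule.mem_iSup_of_mem k (Submodule.mem_iSup_of_mem (Finset.ne_of_mem_erase hk) (hw k))
  have hwj : w j = ∑ k, w k - ∑ k ∈ Finset.univ.erase j, w k := by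
    rw [← Finset.add_sum_erase _ _ (Finset.mem_univ j), add_sub_cancel_right]
  have hdisj : Disjoint (W j) (⨆ k ∈ ({j}ᶜ : Set ι), W k) :=
    hW.disjoint_biSup (Set.notMem_compl_iff.mpr rfl)
  exact Submodule.disjoint_def.mp hdisj _ (hw j) (hwj ▸ Submodule.sub_mem _ (hs hsum) hrest)

theorem LinearEquiv.symm_sum_eq_sum_inv_smul {K M ι : Type*} [Field K] [AddCommGroup M]
    [Module K M] (e : M ≃ₗ[K] M) {s : Finset ι} {w : ι → M} {c : ι → K}
    (hc : ∀ j ∈ s, c j ≠ 0) (he : ∀ j ∈ s, e (w j) = c j • w j) :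
    e.symm (∑ j ∈ s, w j) = ∑ j ∈ s, (c j)⁻¹ • w j := by
  rw [map_sum]
  refine Finset.sum_congr rfl fun j hj => ?_
  rw [LinearEquiv.symm_apply_eq, map_smul, he j hj, smul_smul, inv_mul_cancel₀ (hc j hj), one_smul]

theorem sum_zero_pow_sub_smul_filter_le {R M : Type*} [Semiring R] [AddCommMonoid M]
    [Module R M] {N : ℕ} (i : Fin N) (w : Fin N → M) :
    ∑ j ∈ Finset.univ.filter (· ≤ i), (0 : R) ^ ((i : ℕ) - (j : ℕ)) • w j = w i := by
  rw [Finset.sum_eq_single_of_mem i (by simp)]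
  · simp
  · intro j hj hji
    have : (j : ℕ) < i := Fin.lt_def.mp (lt_of_le_of_ne (Finset.mem_filter.mp hj).2 hji)
    rw [zero_pow (by omega), zero_smul]

theorem stmt_7_general (V : Type*) [NormedAddCommGroup V] [NormedSpace ℂ V]
    (N : ℕ) (W W' : Fin N → Submodule ℂ V)
    (hW' : DirectSum.IsInternal W')
    (hflag : ∀ i : Fin N, (⨆ j ≤ i, W j) = ⨆ j ≤ i, W' j)
    (Λ Λ' : ℂ → (V ≃ₗ[ℂ] V))
    (hΛ : ∀ t : ℂ, t ≠ 0 → ∀ j : Fin N, ∀ u ∈ W j, Λ t u = t ^ ((j : ℕ) + 1) • u)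
    (hΛ' : ∀ t : ℂ, t ≠ 0 → ∀ j : Fin N, ∀ u ∈ W' j, Λ' t u = t ^ ((j : ℕ) + 1) • u)
    (i : Fin N) (v : V) (hv : v ∈ W i)
    (w : Fin N → V) (hw : ∀ j, w j ∈ W' j) (hsum : v = ∑ j, w j) :
    (∀ j, i < j → w j = 0) ∧
    (∀ t : ℂ, t ≠ 0 →
      (Λ' t).symm (Λ t v)
        = ∑ j ∈ Finset.univ.filter (fun j : Fin N => j ≤ i),
            t ^ ((i : ℕ) - (j : ℕ)) • w j) ∧
    Tendsto (fun t : ℂ => (Λ' t).symm (Λ t v)) (nhdsWithin 0 {(0 : ℂ)}ᶜ)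
      (nhds (w i)) := by
  have hv' : ∑ j, w j ∈ ⨆ k ∈ {k | k ≤ i}, W' k :=
    hsum ▸ hflag i ▸ Submodule.mem_iSup_of_mem i (Submodule.mem_iSup_of_mem le_rfl hv)
  have hupper : ∀ j, i < j → w j = 0 := fun j hij =>
    hW'.submodule_iSupIndep.eq_zero_of_sum_mem_biSup hw hv' (not_le.mpr hij)
  have hformula : ∀ t : ℂ, t ≠ 0 → (Λ' t).symm (Λ t v)
      = ∑ j ∈ Finset.univ.filter (fun j : Fin N => j ≤ i), t ^ ((i : ℕ) - (j : ℕ)) • w j := by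
    intro t ht
    rw [hΛ t ht i v hv, map_smul, hsum, (Λ' t).symm_sum_eq_sum_inv_smul
      (fun j _ => pow_ne_zero _ ht) (fun j _ => hΛ' t ht j _ (hw j)), Finset.smul_sum,
      ← Finset.sum_filter_of_ne (p := (· ≤ i))]
    · refine Finset.sum_congr rfl fun j hj => ?_
      have hji : (j : ℕ) + 1 ≤ i + 1 := Nat.succ_le_succ (Finset.mem_filter.mp hj).2
      rw [smul_smul, ← pow_sub₀ _ ht hji, Nat.add_sub_add_right]
    · intro j _ hne
      by_contra hji
      rw [hupper j (not_le.mp hji), smul_zero, smul_zero] at hne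
      exact hne rfl
  refine ⟨hupper, hformula, ?_⟩
  have hcont : Continuous fun t : ℂ =>
      ∑ j ∈ Finset.univ.filter (fun j : Fin N => j ≤ i), t ^ ((i : ℕ) - (j : ℕ)) • w j :=
    continuous_finsetSum _ fun j _ => (continuous_pow _).smul continuous_const
  have hlim := (hcont.tendsto 0).mono_left (nhdsWithin_le_nhds (s := {(0 : ℂ)}ᶜ))
  rw [sum_zero_pow_sub_smul_filter_le] at hlim
  exact hlim.congr' (eventually_nhdsWithin_of_forall fun t ht => (hformula t ht).symm)

/-- Two one-parameter subgroups `λ, λ'` of `GL(V)` acting with weight `i` on the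
pieces `Wᵢ` resp. `W'ᵢ` of two direct sum decompositions with the same flag:
for `v ∈ Wᵢ` with `W'`-decomposition `v = ∑ⱼ wⱼ`, one has `wⱼ = 0` for `j > i`,
`λ'(t)⁻¹ λ(t) v = ∑_{j ≤ i} t^{i−j} wⱼ`, and `λ'(t)⁻¹ λ(t) v → wᵢ` as `t → 0`.
Here the pieces are indexed by `Fin N`, the piece of index `j` having weight
`j + 1 ∈ {1, …, N}`. -/
theorem stmt_7 (V : Type*) [NormedAddCommGroup V] [NormedSpace ℂ V]
    [FiniteDimensional ℂ V]
    (N : ℕ) (hN : 1 ≤ N) (W W' : Fin N → Submodule ℂ V)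
    (hW : DirectSum.IsInternal W) (hW' : DirectSum.IsInternal W')
    (hflag : ∀ i : Fin N, (⨆ j ≤ i, W j) = ⨆ j ≤ i, W' j)
    (Λ Λ' : ℂ → (V ≃ₗ[ℂ] V))
    (hΛ : ∀ t : ℂ, t ≠ 0 → ∀ j : Fin N, ∀ u ∈ W j, Λ t u = t ^ ((j : ℕ) + 1) • u)
    (hΛ' : ∀ t : ℂ, t ≠ 0 → ∀ j : Fin N, ∀ u ∈ W' j, Λ' t u = t ^ ((j : ℕ) + 1) • u)
    (i : Fin N) (v : V) (hv : v ∈ W i)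
    (w : Fin N → V) (hw : ∀ j, w j ∈ W' j) (hsum : v = ∑ j, w j) :
    (∀ j, i < j → w j = 0) ∧
    (∀ t : ℂ, t ≠ 0 →
      (Λ' t).symm (Λ t v)
        = ∑ j ∈ Finset.univ.filter (fun j : Fin N => j ≤ i),
            t ^ ((i : ℕ) - (j : ℕ)) • w j) ∧
    Tendsto (fun t : ℂ => (Λ' t).symm (Λ t v)) (nhdsWithin 0 {(0 : ℂ)}ᶜ)
      (nhds (w i)) :=
  stmt_7_general V N W W' hW' hflag Λ Λ' hΛ hΛ' i v hv w hw hsum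
end

section
/- Let V be a finite-dimensional complex vector space, N ≥ 1, and let W_1, …, W_N and W'_1, …, W'_N be subspaces giving two internal direct sum decompositions V = W_1 ⊕ … ⊕ W_N = W'_1 ⊕ … ⊕ W'_N such that for every i, W_1 ⊕ … ⊕ W_i = W'_1 ⊕ … ⊕ W'_i. Let π_i : V → V be the projection onto W_i along the remaining summands W_j (j ≠ i), and π'_i : V → V the projection onto W'_i along the W'_j (j ≠ i). Then the linear map M_0 = ∑_{i=1}^N π'_i ∘ π_i : V → V is a linear automorphism of V. -/
/-!
With `F_j = W₁ ⊕ ⋯ ⊕ W_j = W'₁ ⊕ ⋯ ⊕ W'_j`, the map `M₀` acts on `w ∈ W_j` as `π'_j`, and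
`π'_j w - w ∈ F_{j-1}` because `w ∈ F_j` has no components in `W'_k` for `k > j`. Hence `M₀ - 1`
lowers the flag strictly, so it is nilpotent and `M₀` is invertible.
-/

open Submodule

section

variable {R V ι : Type*} [Ring R] [AddCommGroup V] [Module R V]

def IsProjectionFamily [Fintype ι] (U : ι → Submodule R V) (p : ι → Module.End R V) : Prop :=
  ∀ v : V, (∀ i, p i v ∈ U i) ∧ ∑ i, p i v = v

namespace IsProjectionFamily

variable [Fintype ι] [DecidableEq ι] {U : ι → Submodule R V} {p : ι → Module.End R V}

theorem sum_erase_apply (hp : IsProjectionFamily U p) (k : ι) (v : V) :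
    ∑ j ∈ Finset.univ.erase k, p j v = v - p k v :=
  eq_sub_of_add_eq' <| (Finset.add_sum_erase _ _ (Finset.mem_univ k)).trans (hp v).2

theorem apply_eq_zero_of_mem_iSup_ne (hp : IsProjectionFamily U p) (hU : iSupIndep U) {k : ι}
    {v : V} (hv : v ∈ ⨆ (j) (_ : j ≠ k), U j) : p k v = 0 := by
  have hcompl : p k v ∈ ⨆ (j) (_ : j ≠ k), U j := by
    rw [← sub_sub_cancel v (p k v), ← hp.sum_erase_apply]
    exact sub_mem hv <| sum_mem fun j hj =>
      mem_iSup_of_mem j <| mem_iSup_of_mem (Finset.ne_of_mem_erase hj) ((hp v).1 j)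
  simpa using (hU k).le_bot (mem_inf.mpr ⟨(hp v).1 k, hcompl⟩)

theorem apply_of_mem_of_ne (hp : IsProjectionFamily U p) (hU : iSupIndep U) {j k : ι}
    (hjk : j ≠ k) {w : V} (hw : w ∈ U j) : p k w = 0 :=
  hp.apply_eq_zero_of_mem_iSup_ne hU <| mem_iSup_of_mem j <| mem_iSup_of_mem hjk hw

theorem apply_self_of_mem (hp : IsProjectionFamily U p) (hU : iSupIndep U) {j : ι} {w : V}
    (hw : w ∈ U j) : p j w = w := by
  have : ∑ k ∈ Finset.univ.erase j, p k w = 0 :=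
    Finset.sum_eq_zero fun k hk => hp.apply_of_mem_of_ne hU (Finset.ne_of_mem_erase hk).symm hw
  rwa [hp.sum_erase_apply, sub_eq_zero, eq_comm] at this

theorem sub_apply_mem_iSup_lt [LinearOrder ι] (hp : IsProjectionFamily U p) (hU : iSupIndep U)
    {j : ι} {w : V} (hw : w ∈ ⨆ k ≤ j, U k) : w - p j w ∈ ⨆ k < j, U k := by
  rw [← hp.sum_erase_apply]
  refine sum_mem fun k hk => ?_
  rcases (Finset.ne_of_mem_erase hk).lt_or_gt with hkj | hjk
  · exact mem_iSup_of_mem k <| mem_iSup_of_mem hkj ((hp w).1 k)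
  · have hle : ⨆ l ≤ j, U l ≤ ⨆ (l) (_ : l ≠ k), U l :=
      iSup₂_mono' fun l (hl : l ≤ j) => ⟨l, (hl.trans_lt hjk).ne, le_rfl⟩
    rw [hp.apply_eq_zero_of_mem_iSup_ne hU (hle hw)]
    exact zero_mem _

theorem sum_comp_apply_of_mem {V' : Type*} [AddCommGroup V'] [Module R V']
    (hp : IsProjectionFamily U p) (hU : iSupIndep U) (g : ι → V →ₗ[R] V') {j : ι} {w : V}
    (hw : w ∈ U j) : (∑ i, g i ∘ₗ p i) w = g j w := by
  rw [LinearMap.sum_apply, Finset.sum_eq_single j, LinearMap.comp_apply,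
    hp.apply_self_of_mem hU hw]
  · intro k _ hkj
    rw [LinearMap.comp_apply, hp.apply_of_mem_of_ne hU hkj.symm hw, map_zero]
  · exact fun hj => (hj (Finset.mem_univ j)).elim

end IsProjectionFamily

theorem iSup_lt_iSup_le {α ι : Type*} [CompleteLattice α] [Preorder ι] (f : ι → α) (j : ι) :
    ⨆ (k) (_ : k < j), ⨆ (l) (_ : l ≤ k), f l = ⨆ (k) (_ : k < j), f k :=
  le_antisymm (iSup₂_le fun _ hk => iSup₂_le fun l hl => le_iSup₂_of_le l (hl.trans_lt hk) le_rfl)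
    (iSup₂_mono fun k _ => le_iSup₂_of_le k le_rfl le_rfl)

namespace Module.End

theorem pow_apply_eq_zero_of_le {f : Module.End R V} {v : V} {m n : ℕ} (hv : (f ^ m) v = 0)
    (hmn : m ≤ n) : (f ^ n) v = 0 := by
  rw [← Nat.sub_add_cancel hmn, pow_add, mul_apply, hv, map_zero]

theorem pow_eq_zero_of_le_comap_iSup_lt {n : ℕ} {f : Module.End R V} {U : Fin n → Submodule R V}
    (htop : ⨆ i, U i = ⊤) (hf : ∀ j, U j ≤ (⨆ k < j, U k).comap f) : f ^ n = 0 := by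
  have hker : ∀ j : Fin n, U j ≤ LinearMap.ker (f ^ (j.val + 1)) := by
    intro j
    induction j using WellFoundedLT.induction with
    | _ j ih =>
      rw [iterate_succ, LinearMap.ker_comp]
      refine (hf j).trans <| comap_mono <| iSup₂_le fun k hk v hv => ?_
      exact pow_apply_eq_zero_of_le (ih k hk hv) hk
  rw [← LinearMap.ker_eq_top, eq_top_iff, ← htop]
  exact iSup_le fun j v hv => pow_apply_eq_zero_of_le (hker j hv) j.is_lt

end Module.End

end

theorem stmt_8_general (V : Type*) [AddCommGroup V] [Module ℂ V]
    (N : ℕ) (W W' : Fin N → Submodule ℂ V)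
    (hW : DirectSum.IsInternal W) (hW' : DirectSum.IsInternal W')
    (hflag : ∀ i : Fin N, (⨆ j ≤ i, W j) = ⨆ j ≤ i, W' j)
    (π π' : Fin N → (V →ₗ[ℂ] V))
    (hπ : ∀ v : V, (∀ i, π i v ∈ W i) ∧ ∑ i, π i v = v)
    (hπ' : ∀ v : V, (∀ i, π' i v ∈ W' i) ∧ ∑ i, π' i v = v) :
    Function.Bijective (∑ i, (π' i) ∘ₗ (π i) : V →ₗ[ℂ] V) := by
  have hp : IsProjectionFamily W π := hπ
  have hp' : IsProjectionFamily W' π' := hπ'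
  set M : Module.End ℂ V := ∑ i, (π' i) ∘ₗ (π i)
  have hflag_lt : ∀ j, ⨆ k < j, W k = ⨆ k < j, W' k := fun j => by
    rw [← iSup_lt_iSup_le W, ← iSup_lt_iSup_le W']
    exact iSup_congr fun k => iSup_congr fun _ => hflag k
  have hnil : (M - 1) ^ N = 0 := by
    refine Module.End.pow_eq_zero_of_le_comap_iSup_lt hW.submodule_iSup_eq_top fun j w hw => ?_
    have hw' : w ∈ ⨆ k ≤ j, W' k := hflag j ▸ mem_iSup_of_mem j (mem_iSup_of_mem le_rfl hw)
    rw [mem_comap, LinearMap.sub_apply, hp.sum_comp_apply_of_mem hW.submodule_iSupIndep π' hw,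
      Module.End.one_apply, ← neg_sub, hflag_lt]
    exact neg_mem (hp'.sub_apply_mem_iSup_lt hW'.submodule_iSupIndep hw')
  simpa using (Module.End.isUnit_iff _).mp (IsNilpotent.isUnit_one_add ⟨N, hnil⟩)

/-- Given two direct sum decompositions `V = W₁ ⊕ … ⊕ W_N = W'₁ ⊕ … ⊕ W'_N` with the
same flag, and the associated projections `πᵢ` onto `Wᵢ` and `π'ᵢ` onto `W'ᵢ`, the
map `M₀ = ∑ᵢ π'ᵢ ∘ πᵢ` is a linear automorphism of `V`. -/
theorem stmt_8 (V : Type*) [AddCommGroup V] [Module ℂ V] [FiniteDimensional ℂ V]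
    (N : ℕ) (hN : 1 ≤ N) (W W' : Fin N → Submodule ℂ V)
    (hW : DirectSum.IsInternal W) (hW' : DirectSum.IsInternal W')
    (hflag : ∀ i : Fin N, (⨆ j ≤ i, W j) = ⨆ j ≤ i, W' j)
    (π π' : Fin N → (V →ₗ[ℂ] V))
    (hπ : ∀ v : V, (∀ i, π i v ∈ W i) ∧ ∑ i, π i v = v)
    (hπ' : ∀ v : V, (∀ i, π' i v ∈ W' i) ∧ ∑ i, π' i v = v) :
    Function.Bijective (∑ i, (π' i) ∘ₗ (π i) : V →ₗ[ℂ] V) :=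
  stmt_8_general V N W W' hW hW' hflag π π' hπ hπ'
end
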